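/- arXiv:2502.06651 — 3 statements merged into one kernel-verified Lean document; each statement's English description precedes it below -/
import Mathlib

section
/- For every positive integer L, every natural number d, and every integer b with d+1 ≤ b ≤ d+2^L, there exists a vector χ indexed by pairs (j,l) with 0 ≤ l ≤ L and 1 ≤ j ≤ ⌈2^(L-l)⌉, taking values in {-1,0,1}, with at most ⌈(L+1)/2⌉ nonzero entries, such that the indicator function of the interval [d+1, b] on the integers equals the sum over (j,l) of χ_{j,l} times the indicator function of the interval [d+(j-1)·2^l+1, d+j·2^l]. -/
/-- indicator of the integer interval [a,b] as a real-valued function on ℤ -/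
def intervalInd (a b : ℤ) (x : ℤ) : ℝ := if a ≤ x ∧ x ≤ b then 1 else 0

/-- index set of the dyadic family `Z_{L,d}` : pairs (j,l) with l ∈ [0,L], j ∈ [⌈2^(L-l)⌉] -/
def dyadicIdx (L : ℕ) : Finset (ℕ × ℕ) :=
  (Finset.Icc 1 (2 ^ L) ×ˢ Finset.Icc 0 L).filter (fun p => p.1 ≤ 2 ^ (L - p.2))

lemma mem_dyadicIdx {L j l : ℕ} (hl : l ≤ L) (hj1 : 1 ≤ j) (hj2 : j * 2 ^ l ≤ 2 ^ L) :
    (j, l) ∈ dyadicIdx L := by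
  have h2 : 2 ^ L = 2 ^ (L - l) * 2 ^ l := by rw [← pow_add]; congr 1; omega
  have hj3 : j ≤ 2 ^ (L - l) := by
    rw [h2] at hj2
    exact Nat.le_of_mul_le_mul_right hj2 (Nat.two_pow_pos l)
  have hjL : j ≤ 2 ^ L := le_trans hj3 (Nat.pow_le_pow_right (by norm_num) (Nat.sub_le L l))
  simp only [dyadicIdx, Finset.mem_filter, Finset.mem_product, Finset.mem_Icc]
  exact ⟨⟨⟨hj1, hjL⟩, Nat.zero_le _, hl⟩, hj3⟩

lemma intervalInd_split (a b c : ℤ) (h1 : a ≤ b + 1) (h2 : b ≤ c) (x : ℤ) :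
    intervalInd a c x = intervalInd a b x + intervalInd (b + 1) c x := by
  unfold intervalInd
  split_ifs <;> first | (exfalso; omega) | norm_num

lemma combine {L : ℕ} {q : ℕ × ℕ} (hq : q ∈ dyadicIdx L)
    {χ' : ℕ × ℕ → ℤ} (hval : ∀ p, χ' p = -1 ∨ χ' p = 0 ∨ χ' p = 1)
    (hsupp : ∀ p, χ' p ≠ 0 → p.2 < q.2) :
    (∀ p, (if p = q then 1 else 0) + χ' p = -1 ∨ (if p = q then 1 else 0) + χ' p = 0 ∨
      (if p = q then 1 else 0) + χ' p = 1) ∧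
    ((dyadicIdx L).filter (fun p => (if p = q then 1 else 0) + χ' p ≠ 0)).card ≤
      ((dyadicIdx L).filter (fun p => χ' p ≠ 0)).card + 1 ∧
    ∀ g : ℕ × ℕ → ℝ,
      ∑ p ∈ dyadicIdx L, (((if p = q then 1 else 0) + χ' p : ℤ) : ℝ) * g p
        = g q + ∑ p ∈ dyadicIdx L, (χ' p : ℝ) * g p := by
  have hq0 : χ' q = 0 := by
    by_contra h
    exact absurd (hsupp q h) (lt_irrefl _)
  refine ⟨?_, ?_, ?_⟩
  · intro p
    by_cases hp : p = q
    · subst hp; simp [hq0]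
    · simp only [if_neg hp, zero_add]; exact hval p
  · apply le_trans (Finset.card_le_card ?_) (Finset.card_insert_le q _)
    intro p hp
    simp only [Finset.mem_filter] at hp
    by_cases hpq : p = q
    · exact Finset.mem_insert.2 (Or.inl hpq)
    · refine Finset.mem_insert.2 (Or.inr ?_)
      simp only [Finset.mem_filter]
      refine ⟨hp.1, ?_⟩
      simpa [if_neg hpq] using hp.2
  · intro g
    have h : ∀ p ∈ dyadicIdx L,
        (((if p = q then (1:ℤ) else 0) + χ' p : ℤ) : ℝ) * g p
          = (if p = q then g p else 0) + (χ' p : ℝ) * g p := by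
      intro p _
      by_cases hp : p = q <;> simp [hp, hq0]
    rw [Finset.sum_congr rfl h, Finset.sum_add_distrib, Finset.sum_ite_eq' _ q g, if_pos hq]

lemma key (d L : ℕ) : ∀ l, l ≤ L → ∀ t m : ℕ, m ≤ 2 ^ l → (t + 1) * 2 ^ l ≤ 2 ^ L →
    ∀ pre : Bool, ∃ χ : ℕ × ℕ → ℤ,
      (∀ p, χ p = -1 ∨ χ p = 0 ∨ χ p = 1) ∧
      (∀ p, χ p ≠ 0 → p.2 ≤ l) ∧
      ((dyadicIdx L).filter (fun p => χ p ≠ 0)).card ≤ (l + 2) / 2 ∧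
      ∀ x : ℤ,
        (if pre then intervalInd ((d : ℤ) + (t : ℤ) * 2 ^ l + 1) ((d : ℤ) + (t : ℤ) * 2 ^ l + (m : ℤ)) x
         else intervalInd ((d : ℤ) + ((t : ℤ) + 1) * 2 ^ l - (m : ℤ) + 1) ((d : ℤ) + ((t : ℤ) + 1) * 2 ^ l) x)
        = ∑ p ∈ dyadicIdx L, (χ p : ℝ) *
            intervalInd ((d : ℤ) + (p.1 - 1) * 2 ^ p.2 + 1) ((d : ℤ) + p.1 * 2 ^ p.2) x := by
  intro l
  induction l using Nat.strong_induction_on with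
  | _ l ih =>
    intro hl t m hm hb pre
    by_cases hm0 : m = 0
    · -- empty interval
      subst hm0
      refine ⟨fun _ => 0, fun p => Or.inr (Or.inl rfl), fun p hp => absurd rfl hp, by simp, ?_⟩
      intro x
      have hrhs : ∑ p ∈ dyadicIdx L, ((0 : ℤ) : ℝ) *
          intervalInd ((d : ℤ) + (p.1 - 1) * 2 ^ p.2 + 1) ((d : ℤ) + p.1 * 2 ^ p.2) x = 0 := by
        simp
      rw [hrhs]
      cases pre <;> simp only [if_true, if_false, Bool.false_eq_true, Nat.cast_zero]
      · unfold intervalInd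
        rw [if_neg]
        intro ⟨hx1, hx2⟩
        linarith
      · unfold intervalInd
        rw [if_neg]
        intro ⟨hx1, hx2⟩
        linarith
    · by_cases hmf : m = 2 ^ l
      · -- full block
        subst hmf
        have hq : ((t + 1, l) : ℕ × ℕ) ∈ dyadicIdx L := mem_dyadicIdx hl (by omega) hb
        obtain ⟨hval, hcard, hsum⟩ := combine hq (χ' := fun _ => 0)
          (fun p => Or.inr (Or.inl rfl)) (fun p hp => absurd rfl hp)
        refine ⟨_, hval, ?_, ?_, ?_⟩
        · intro p hp
          by_cases hpq : p = (t + 1, l)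
          · subst hpq; exact le_refl l
          · rw [if_neg hpq] at hp; exact absurd rfl hp
        · refine le_trans hcard ?_
          have : ((dyadicIdx L).filter (fun p => (0:ℤ) ≠ 0)).card = 0 := by simp
          rw [this]
          omega
        · intro x
          rw [hsum (fun p => intervalInd ((d : ℤ) + (p.1 - 1) * 2 ^ p.2 + 1)
              ((d : ℤ) + p.1 * 2 ^ p.2) x)]
          have hz : ∑ p ∈ dyadicIdx L, ((0:ℤ) : ℝ) *
              intervalInd ((d : ℤ) + (p.1 - 1) * 2 ^ p.2 + 1) ((d : ℤ) + p.1 * 2 ^ p.2) x = 0 := by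
            simp
          rw [hz, add_zero]
          have e1 : (d : ℤ) + (((t + 1 : ℕ) : ℤ) - 1) * 2 ^ l + 1 = (d : ℤ) + (t : ℤ) * 2 ^ l + 1 := by
            push_cast; ring
          have e2 : (d : ℤ) + ((t + 1 : ℕ) : ℤ) * 2 ^ l = (d : ℤ) + ((t : ℤ) + 1) * 2 ^ l := by
            push_cast; ring
          cases pre <;> simp only [if_true, if_false, Bool.false_eq_true]
          · show intervalInd _ _ x = intervalInd ((d : ℤ) + (((t + 1 : ℕ) : ℤ) - 1) * 2 ^ l + 1)
              ((d : ℤ) + ((t + 1 : ℕ) : ℤ) * 2 ^ l) x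
            rw [e1, e2]
            congr 1 <;> push_cast <;> ring
          · show intervalInd _ _ x = intervalInd ((d : ℤ) + (((t + 1 : ℕ) : ℤ) - 1) * 2 ^ l + 1)
              ((d : ℤ) + ((t + 1 : ℕ) : ℤ) * 2 ^ l) x
            rw [e1, e2]
            congr 1 <;> push_cast <;> ring
      · -- 0 < m < 2^l
        have hl1 : 1 ≤ l := by
          by_contra h
          have : l = 0 := by omega
          subst this
          simp at hm
          omega
        obtain ⟨k, rfl⟩ : ∃ k, l = k + 1 := ⟨l - 1, by omega⟩
        have hpow : 2 ^ (k + 1) = 2 * 2 ^ k := by ring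
        by_cases hhalf : m ≤ 2 ^ k
        · -- recurse into half block, no new interval
          cases pre with
          | true =>
            obtain ⟨χ', hval', hsupp', hcard', hsum'⟩ :=
              ih k (by omega) (by omega) (2 * t) m hhalf
                (by
                  have h2 : (2 * t + 2) * 2 ^ k = (t + 1) * 2 ^ (k + 1) := by ring
                  calc (2 * t + 1) * 2 ^ k ≤ (2 * t + 2) * 2 ^ k :=
                        Nat.mul_le_mul_right _ (by omega)
                    _ ≤ 2 ^ L := h2 ▸ hb) true
            refine ⟨χ', hval', fun p hp => le_trans (hsupp' p hp) (by omega),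
              le_trans hcard' (by omega), ?_⟩
            intro x
            have h := hsum' x
            rw [if_pos rfl] at h
            rw [if_pos rfl]
            have e : ((2 * t : ℕ) : ℤ) * 2 ^ k = (t : ℤ) * 2 ^ (k + 1) := by push_cast; ring
            rw [e] at h
            exact h
          | false =>
            obtain ⟨χ', hval', hsupp', hcard', hsum'⟩ :=
              ih k (by omega) (by omega) (2 * t + 1) m hhalf
                (by
                  have h2 : (2 * t + 1 + 1) * 2 ^ k = (t + 1) * 2 ^ (k + 1) := by ring
                  rw [h2]; exact hb) false
            refine ⟨χ', hval', fun p hp => le_trans (hsupp' p hp) (by omega),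
              le_trans hcard' (by omega), ?_⟩
            intro x
            have h := hsum' x
            rw [if_neg (by simp)] at h
            rw [if_neg (by simp)]
            have e : (((2 * t + 1 : ℕ) : ℤ) + 1) * 2 ^ k = ((t : ℤ) + 1) * 2 ^ (k + 1) := by
              push_cast; ring
            rw [e] at h
            exact h
        · -- m > 2^k : need k ≥ 1
          have hk1 : 1 ≤ k := by
            by_contra h
            have hk0 : k = 0 := by omega
            subst hk0
            norm_num at hm hhalf
            omega
          obtain ⟨k', rfl⟩ : ∃ k', k = k' + 1 := ⟨k - 1, by omega⟩
          have p1 : 2 ^ (k' + 2) = 4 * 2 ^ k' := by ring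
          have p2 : 2 ^ (k' + 1) = 2 * 2 ^ k' := by ring
          by_cases hA : m ≤ 2 ^ (k' + 1) + 2 ^ k'
          · -- case A : half block plus remainder r ≤ quarter
            obtain ⟨r, rfl⟩ : ∃ r, m = 2 ^ (k' + 1) + r := ⟨m - 2 ^ (k' + 1), by omega⟩
            have hr2 : r ≤ 2 ^ k' := by omega
            cases pre with
            | true =>
              have hq : ((2 * t + 1, k' + 1) : ℕ × ℕ) ∈ dyadicIdx L := by
                refine mem_dyadicIdx (by omega) (by omega) ?_
                calc (2 * t + 1) * 2 ^ (k' + 1) ≤ (2 * t + 2) * 2 ^ (k' + 1) :=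
                      Nat.mul_le_mul_right _ (by omega)
                  _ = (t + 1) * 2 ^ (k' + 2) := by ring
                  _ ≤ 2 ^ L := hb
              obtain ⟨χ', hval', hsupp', hcard', hsum'⟩ :=
                ih k' (by omega) (by omega) (4 * t + 2) r hr2
                  (by
                    calc (4 * t + 2 + 1) * 2 ^ k' ≤ (4 * t + 4) * 2 ^ k' :=
                          Nat.mul_le_mul_right _ (by omega)
                      _ = (t + 1) * 2 ^ (k' + 2) := by ring
                      _ ≤ 2 ^ L := hb) true
              obtain ⟨hval, hcard, hsum⟩ := combine hq hval'
                (fun p hp => lt_of_le_of_lt (hsupp' p hp) (by omega))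
              refine ⟨_, hval, ?_, le_trans hcard (by omega), ?_⟩
              · intro p hp
                by_cases hpq : p = (2 * t + 1, k' + 1)
                · subst hpq; show k' + 1 ≤ k' + 1 + 1; omega
                · rw [if_neg hpq, zero_add] at hp
                  exact le_trans (hsupp' p hp) (by omega)
              · intro x
                rw [if_pos rfl]
                rw [hsum (fun p => intervalInd ((d : ℤ) + (p.1 - 1) * 2 ^ p.2 + 1)
                    ((d : ℤ) + p.1 * 2 ^ p.2) x)]
                have h' := hsum' x
                rw [if_pos rfl] at h'
                rw [← h']
                have hsplit := intervalInd_split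
                  ((d : ℤ) + (t : ℤ) * 2 ^ (k' + 2) + 1)
                  ((d : ℤ) + (t : ℤ) * 2 ^ (k' + 2) + 2 ^ (k' + 1))
                  ((d : ℤ) + (t : ℤ) * 2 ^ (k' + 2) + 2 ^ (k' + 1) + (r : ℤ))
                  (by linarith [pow_nonneg (by norm_num : (0:ℤ) ≤ 2) (k' + 1)])
                  (by linarith [Int.natCast_nonneg r]) x
                push_cast
                push_cast at hsplit
                ring_nf
                ring_nf at hsplit
                linarith [hsplit]
            | false =>
              have hq : ((2 * t + 2, k' + 1) : ℕ × ℕ) ∈ dyadicIdx L := by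
                refine mem_dyadicIdx (by omega) (by omega) ?_
                calc (2 * t + 2) * 2 ^ (k' + 1) = (t + 1) * 2 ^ (k' + 2) := by ring
                  _ ≤ 2 ^ L := hb
              obtain ⟨χ', hval', hsupp', hcard', hsum'⟩ :=
                ih k' (by omega) (by omega) (4 * t + 1) r hr2
                  (by
                    calc (4 * t + 1 + 1) * 2 ^ k' ≤ (4 * t + 4) * 2 ^ k' :=
                          Nat.mul_le_mul_right _ (by omega)
                      _ = (t + 1) * 2 ^ (k' + 2) := by ring
                      _ ≤ 2 ^ L := hb) false
              obtain ⟨hval, hcard, hsum⟩ := combine hq hval'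
                (fun p hp => lt_of_le_of_lt (hsupp' p hp) (by omega))
              refine ⟨_, hval, ?_, le_trans hcard (by omega), ?_⟩
              · intro p hp
                by_cases hpq : p = (2 * t + 2, k' + 1)
                · subst hpq; show k' + 1 ≤ k' + 1 + 1; omega
                · rw [if_neg hpq, zero_add] at hp
                  exact le_trans (hsupp' p hp) (by omega)
              · intro x
                rw [if_neg (by simp)]
                rw [hsum (fun p => intervalInd ((d : ℤ) + (p.1 - 1) * 2 ^ p.2 + 1)
                    ((d : ℤ) + p.1 * 2 ^ p.2) x)]
                have h' := hsum' x
                rw [if_neg (by simp)] at h'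
                rw [← h']
                have hsplit := intervalInd_split
                  ((d : ℤ) + (t : ℤ) * 2 ^ (k' + 2) + 2 ^ (k' + 1) - (r : ℤ) + 1)
                  ((d : ℤ) + (t : ℤ) * 2 ^ (k' + 2) + 2 ^ (k' + 1))
                  ((d : ℤ) + (t : ℤ) * 2 ^ (k' + 2) + 2 ^ (k' + 2))
                  (by linarith [Int.natCast_nonneg r])
                  (by
                    have e : (2:ℤ) ^ (k' + 2) = 2 * 2 ^ (k' + 1) := by ring
                    linarith [pow_nonneg (by norm_num : (0:ℤ) ≤ 2) (k' + 1)]) x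
                push_cast
                push_cast at hsplit
                ring_nf
                ring_nf at hsplit
                linarith [hsplit]
          · -- case B : full block minus remainder s < quarter
            obtain ⟨s, hs, hs2⟩ : ∃ s, m + s = 2 ^ (k' + 2) ∧ s ≤ 2 ^ k' :=
              ⟨2 ^ (k' + 2) - m, by omega, by omega⟩
            have hsz : (m : ℤ) + (s : ℤ) = 2 ^ (k' + 2) := by exact_mod_cast hs
            have hmz : (m : ℤ) = 2 ^ (k' + 2) - (s : ℤ) := by linarith
            have hq : ((t + 1, k' + 2) : ℕ × ℕ) ∈ dyadicIdx L :=
              mem_dyadicIdx (by omega) (by omega) hb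
            -- negation helper facts are built per branch
            cases pre with
            | true =>
              obtain ⟨χ', hval', hsupp', hcard', hsum'⟩ :=
                ih k' (by omega) (by omega) (4 * t + 3) s hs2
                  (by
                    calc (4 * t + 3 + 1) * 2 ^ k' = (t + 1) * 2 ^ (k' + 2) := by ring
                      _ ≤ 2 ^ L := hb) false
              have hvalN : ∀ p, -χ' p = -1 ∨ -χ' p = 0 ∨ -χ' p = 1 := by
                intro p
                rcases hval' p with h | h | h <;> simp [h]
              obtain ⟨hval, hcard, hsum⟩ := combine hq hvalN
                (fun p hp => lt_of_le_of_lt (hsupp' p (by simpa using hp)) (by omega))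
              have hfilt : (dyadicIdx L).filter (fun p => -χ' p ≠ 0) =
                  (dyadicIdx L).filter (fun p => χ' p ≠ 0) := by
                apply Finset.filter_congr
                intro p _
                simp
              refine ⟨_, hval, ?_, le_trans hcard (by rw [hfilt]; omega), ?_⟩
              · intro p hp
                by_cases hpq : p = (t + 1, k' + 2)
                · subst hpq; show k' + 2 ≤ k' + 1 + 1; omega
                · rw [if_neg hpq, zero_add] at hp
                  have : χ' p ≠ 0 := by simpa using hp
                  exact le_trans (hsupp' p this) (by omega)
              · intro x
                rw [if_pos rfl]
                rw [hsum (fun p => intervalInd ((d : ℤ) + (p.1 - 1) * 2 ^ p.2 + 1)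
                    ((d : ℤ) + p.1 * 2 ^ p.2) x)]
                have h' := hsum' x
                rw [if_neg (by simp)] at h'
                have hnegsum : ∑ p ∈ dyadicIdx L, ((-χ' p : ℤ) : ℝ) *
                    intervalInd ((d : ℤ) + (p.1 - 1) * 2 ^ p.2 + 1) ((d : ℤ) + p.1 * 2 ^ p.2) x
                    = -∑ p ∈ dyadicIdx L, (χ' p : ℝ) *
                    intervalInd ((d : ℤ) + (p.1 - 1) * 2 ^ p.2 + 1) ((d : ℤ) + p.1 * 2 ^ p.2) x := by
                  rw [← Finset.sum_neg_distrib]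
                  apply Finset.sum_congr rfl
                  intro p _
                  push_cast
                  ring
                rw [hnegsum, ← h']
                have hsplit := intervalInd_split
                  ((d : ℤ) + (t : ℤ) * 2 ^ (k' + 2) + 1)
                  ((d : ℤ) + (t : ℤ) * 2 ^ (k' + 2) + 2 ^ (k' + 2) - (s : ℤ))
                  ((d : ℤ) + (t : ℤ) * 2 ^ (k' + 2) + 2 ^ (k' + 2))
                  (by linarith [Int.natCast_nonneg m])
                  (by linarith [Int.natCast_nonneg s]) x
                rw [hmz]
                push_cast
                push_cast at hsplit
                ring_nf
                ring_nf at hsplit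
                linarith [hsplit]
            | false =>
              obtain ⟨χ', hval', hsupp', hcard', hsum'⟩ :=
                ih k' (by omega) (by omega) (4 * t) s hs2
                  (by
                    calc (4 * t + 1) * 2 ^ k' ≤ (4 * t + 4) * 2 ^ k' :=
                          Nat.mul_le_mul_right _ (by omega)
                      _ = (t + 1) * 2 ^ (k' + 2) := by ring
                      _ ≤ 2 ^ L := hb) true
              have hvalN : ∀ p, -χ' p = -1 ∨ -χ' p = 0 ∨ -χ' p = 1 := by
                intro p
                rcases hval' p with h | h | h <;> simp [h]
              obtain ⟨hval, hcard, hsum⟩ := combine hq hvalN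
                (fun p hp => lt_of_le_of_lt (hsupp' p (by simpa using hp)) (by omega))
              have hfilt : (dyadicIdx L).filter (fun p => -χ' p ≠ 0) =
                  (dyadicIdx L).filter (fun p => χ' p ≠ 0) := by
                apply Finset.filter_congr
                intro p _
                simp
              refine ⟨_, hval, ?_, le_trans hcard (by rw [hfilt]; omega), ?_⟩
              · intro p hp
                by_cases hpq : p = (t + 1, k' + 2)
                · subst hpq; show k' + 2 ≤ k' + 1 + 1; omega
                · rw [if_neg hpq, zero_add] at hp
                  have : χ' p ≠ 0 := by simpa using hp
                  exact le_trans (hsupp' p this) (by omega)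
              · intro x
                rw [if_neg (by simp)]
                rw [hsum (fun p => intervalInd ((d : ℤ) + (p.1 - 1) * 2 ^ p.2 + 1)
                    ((d : ℤ) + p.1 * 2 ^ p.2) x)]
                have h' := hsum' x
                rw [if_pos rfl] at h'
                have hnegsum : ∑ p ∈ dyadicIdx L, ((-χ' p : ℤ) : ℝ) *
                    intervalInd ((d : ℤ) + (p.1 - 1) * 2 ^ p.2 + 1) ((d : ℤ) + p.1 * 2 ^ p.2) x
                    = -∑ p ∈ dyadicIdx L, (χ' p : ℝ) *
                    intervalInd ((d : ℤ) + (p.1 - 1) * 2 ^ p.2 + 1) ((d : ℤ) + p.1 * 2 ^ p.2) x := by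
                  rw [← Finset.sum_neg_distrib]
                  apply Finset.sum_congr rfl
                  intro p _
                  push_cast
                  ring
                rw [hnegsum, ← h']
                have hsplit := intervalInd_split
                  ((d : ℤ) + (t : ℤ) * 2 ^ (k' + 2) + 1)
                  ((d : ℤ) + (t : ℤ) * 2 ^ (k' + 2) + (s : ℤ))
                  ((d : ℤ) + (t : ℤ) * 2 ^ (k' + 2) + 2 ^ (k' + 2))
                  (by linarith [Int.natCast_nonneg s])
                  (by linarith [Int.natCast_nonneg m]) x
                rw [hmz]
                push_cast
                push_cast at hsplit
                ring_nf
                ring_nf at hsplit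
                linarith [hsplit]

theorem stmt0 (L : ℕ) (hL : 1 ≤ L) (d : ℕ) (b : ℤ)
    (hb1 : (d : ℤ) + 1 ≤ b) (hb2 : b ≤ (d : ℤ) + 2 ^ L) :
    ∃ χ : ℕ × ℕ → ℤ,
      (∀ p, χ p = -1 ∨ χ p = 0 ∨ χ p = 1) ∧
      ((dyadicIdx L).filter (fun p => χ p ≠ 0)).card ≤ (L + 1 + 1) / 2 ∧
      ∀ x : ℤ, intervalInd ((d : ℤ) + 1) b x =
        ∑ p ∈ dyadicIdx L, (χ p : ℝ) *
          intervalInd ((d : ℤ) + (p.1 - 1) * 2 ^ p.2 + 1) ((d : ℤ) + p.1 * 2 ^ p.2) x := by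
  set m : ℕ := (b - d).toNat with hmdef
  have hbm : b = (d : ℤ) + (m : ℤ) := by
    rw [hmdef]
    omega
  have hm2 : m ≤ 2 ^ L := by
    have h2 : ((2 ^ L : ℕ) : ℤ) = (2 : ℤ) ^ L := by push_cast; ring
    have : (m : ℤ) ≤ ((2 ^ L : ℕ) : ℤ) := by rw [h2]; omega
    exact_mod_cast this
  obtain ⟨χ, h1, _, h3, h4⟩ := key d L L (le_refl L) 0 m hm2 (by omega) true
  refine ⟨χ, h1, le_trans h3 (by omega), ?_⟩
  intro x
  have h := h4 x
  rw [if_pos rfl] at h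
  have e1 : (d : ℤ) + ((0 : ℕ) : ℤ) * 2 ^ L + 1 = (d : ℤ) + 1 := by push_cast; ring
  have e2 : (d : ℤ) + ((0 : ℕ) : ℤ) * 2 ^ L + (m : ℤ) = b := by rw [hbm]; push_cast; ring
  rw [e1, e2] at h
  exact h
end

section
/- Let L ≥ 0 and let 0 ≤ t1 < t2 ≤ 2^L be integers. Then there exists a vector χ indexed by pairs (j,l) with 0 ≤ l ≤ L and 1 ≤ j ≤ 2^(L-l), taking values in {-1,0,1}, with at most L+1 nonzero entries, such that the indicator function of the interval [t1+1, t2] equals the sum over (j,l) of χ_{j,l} times the indicator of the dyadic interval [(j-1)·2^l+1, j·2^l]. -/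
/-! A prefix `[1, t]` of `[1, 2^L]` is a signed sum of at most `⌊L/2⌋ + 1` dyadic blocks. Going
down two levels at a time, `t` falls into one of four quarters: in the first half, `[1, t]` is a
prefix one level down; in the third quarter it is the left half plus a shifted prefix of a
quarter; in the last quarter it is the whole block minus the mirror image of a prefix of a
quarter, since `x ↦ 2^L + 1 - x` permutes the dyadic blocks. Mirroring gives the same bound for
suffixes. An interval either lies in one half of the block, where induction on `L` applies, or
is a suffix of the left half plus a shifted prefix of the right half, which costs at most
`2 (⌊L/2⌋ + 1) ≤ L + 2` blocks at level `L + 1`. -/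

lemma intervalInd_eq_add {a b : ℤ} (c : ℤ) (hac : a ≤ c + 1) (hcb : c ≤ b) (x : ℤ) :
    intervalInd a b x = intervalInd a c x + intervalInd (c + 1) b x := by
  unfold intervalInd
  split_ifs <;> first | omega | norm_num

lemma intervalInd_sub (a b s x : ℤ) :
    intervalInd a b (x - s) = intervalInd (a + s) (b + s) x := by
  unfold intervalInd
  split_ifs <;> first | rfl | omega

lemma intervalInd_sub_left (a b s x : ℤ) :
    intervalInd a b (s - x) = intervalInd (s - b) (s - a) x := by
  unfold intervalInd
  split_ifs <;> first | rfl | omega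

def dyadInd (p : ℕ × ℕ) : ℤ → ℝ :=
  intervalInd (((p.1 : ℤ) - 1) * 2 ^ p.2 + 1) ((p.1 : ℤ) * 2 ^ p.2)

lemma dyadInd_one_left (l : ℕ) : dyadInd (1, l) = intervalInd 1 (2 ^ l) := by
  simp [dyadInd]

lemma mem_dyadicIdx_s3 {L : ℕ} {p : ℕ × ℕ} :
    p ∈ dyadicIdx L ↔ 1 ≤ p.1 ∧ p.2 ≤ L ∧ p.1 ≤ 2 ^ (L - p.2) := by
  have : 2 ^ (L - p.2) ≤ 2 ^ L := Nat.pow_le_pow_right two_pos (Nat.sub_le L p.2)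
  simp only [dyadicIdx, Finset.mem_filter, Finset.mem_product, Finset.mem_Icc]
  omega

lemma dyadicIdx_mono : Monotone dyadicIdx := by
  intro L M hLM p hp
  rw [mem_dyadicIdx_s3] at hp ⊢
  have : 2 ^ (L - p.2) ≤ 2 ^ (M - p.2) := Nat.pow_le_pow_right two_pos (by omega)
  omega

lemma one_mem_dyadicIdx (L : ℕ) : (1, L) ∈ dyadicIdx L := by
  simp [mem_dyadicIdx_s3]

def dyadicShift (M : ℕ) (p : ℕ × ℕ) : ℕ × ℕ := (p.1 + 2 ^ (M - p.2), p.2)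

def dyadicReflect (M : ℕ) (p : ℕ × ℕ) : ℕ × ℕ := (2 ^ (M - p.2) + 1 - p.1, p.2)

lemma two_pow_sub_mul_two_pow {l M : ℕ} (h : l ≤ M) : (2 : ℤ) ^ (M - l) * 2 ^ l = 2 ^ M := by
  rw [← pow_add, Nat.sub_add_cancel h]

lemma dyadInd_dyadicShift {M : ℕ} {p : ℕ × ℕ} (hp : p.2 ≤ M) (x : ℤ) :
    dyadInd (dyadicShift M p) x = dyadInd p (x - 2 ^ M) := by
  simp only [dyadInd, dyadicShift, intervalInd_sub]
  rw [← two_pow_sub_mul_two_pow hp]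
  push_cast
  ring_nf

lemma dyadInd_dyadicReflect {M : ℕ} {p : ℕ × ℕ} (hp : p ∈ dyadicIdx M) (x : ℤ) :
    dyadInd (dyadicReflect M p) x = dyadInd p (2 ^ M + 1 - x) := by
  rw [mem_dyadicIdx_s3] at hp
  simp only [dyadInd, dyadicReflect, intervalInd_sub_left]
  rw [Nat.cast_sub (by omega), ← two_pow_sub_mul_two_pow hp.2.1]
  push_cast
  ring_nf

lemma dyadicShift_injective (M : ℕ) : Function.Injective (dyadicShift M) := by
  rintro ⟨j, l⟩ ⟨j', l'⟩ h
  simp only [dyadicShift, Prod.mk.injEq] at h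
  obtain ⟨hj, rfl⟩ := h
  simp only [Prod.mk.injEq, and_true]
  omega

lemma dyadicReflect_injOn (M : ℕ) : Set.InjOn (dyadicReflect M) (dyadicIdx M) := by
  rintro ⟨j, l⟩ hp ⟨j', l'⟩ hp' h
  simp only [Finset.mem_coe, mem_dyadicIdx_s3] at hp hp'
  simp only [dyadicReflect, Prod.mk.injEq] at h
  obtain ⟨hj, rfl⟩ := h
  simp only [Prod.mk.injEq, and_true]
  omega

lemma image_dyadicShift_subset (M : ℕ) :
    dyadicShift M '' (dyadicIdx M) ⊆ dyadicIdx (M + 1) := by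
  rintro _ ⟨p, hp, rfl⟩
  simp only [Finset.mem_coe, mem_dyadicIdx_s3, dyadicShift] at hp ⊢
  rw [Nat.sub_add_comm hp.2.1, pow_succ]
  omega

lemma disjoint_image_dyadicShift (M : ℕ) :
    Disjoint (dyadicIdx M : Set (ℕ × ℕ)) (dyadicShift M '' (dyadicIdx M)) := by
  rw [Set.disjoint_right]
  rintro _ ⟨p, hp, rfl⟩ hp'
  simp only [Finset.mem_coe, mem_dyadicIdx_s3, dyadicShift] at hp hp'
  omega

lemma image_dyadicReflect_subset (M : ℕ) :
    dyadicReflect M '' (dyadicIdx M) ⊆ dyadicIdx M := by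
  rintro _ ⟨p, hp, rfl⟩
  simp only [Finset.mem_coe, mem_dyadicIdx_s3, dyadicReflect] at hp ⊢
  omega

def IsSignedDyadicSum (T : Set (ℕ × ℕ)) (n : ℕ) (f : ℤ → ℝ) : Prop :=
  ∃ s t : Finset (ℕ × ℕ), ↑s ⊆ T ∧ ↑t ⊆ T ∧ s.card + t.card ≤ n ∧
    ∀ x, f x = ∑ p ∈ s, dyadInd p x - ∑ p ∈ t, dyadInd p x

namespace IsSignedDyadicSum

variable {T T₁ T₂ : Set (ℕ × ℕ)} {n n₁ n₂ : ℕ} {f g : ℤ → ℝ}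

lemma mono (hT : T₁ ⊆ T₂) (hn : n₁ ≤ n₂) (h : IsSignedDyadicSum T₁ n₁ f) :
    IsSignedDyadicSum T₂ n₂ f := by
  obtain ⟨s, t, hs, ht, hcard, hf⟩ := h
  exact ⟨s, t, hs.trans hT, ht.trans hT, hcard.trans hn, hf⟩

lemma congr (h : IsSignedDyadicSum T n f) (hfg : ∀ x, f x = g x) : IsSignedDyadicSum T n g := by
  obtain ⟨s, t, hs, ht, hcard, hf⟩ := h
  exact ⟨s, t, hs, ht, hcard, fun x => hfg x ▸ hf x⟩

lemma empty {a b : ℤ} (hba : b < a) : IsSignedDyadicSum T n (intervalInd a b) :=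
  ⟨∅, ∅, by simp, by simp, by simp, fun x => by rw [intervalInd, if_neg (by omega)]; simp⟩

lemma single {p : ℕ × ℕ} (hp : p ∈ T) : IsSignedDyadicSum T 1 (dyadInd p) :=
  ⟨{p}, ∅, by simpa using hp, by simp, by simp, by simp⟩

lemma neg (h : IsSignedDyadicSum T n f) : IsSignedDyadicSum T n (-f) := by
  obtain ⟨s, t, hs, ht, hcard, hf⟩ := h
  exact ⟨t, s, ht, hs, by omega, fun x => by simp [hf x]⟩

lemma add (hT : Disjoint T₁ T₂) (hf : IsSignedDyadicSum T₁ n₁ f)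
    (hg : IsSignedDyadicSum T₂ n₂ g) : IsSignedDyadicSum (T₁ ∪ T₂) (n₁ + n₂) (f + g) := by
  obtain ⟨s₁, t₁, hs₁, ht₁, hcard₁, hf⟩ := hf
  obtain ⟨s₂, t₂, hs₂, ht₂, hcard₂, hg⟩ := hg
  have hs : Disjoint s₁ s₂ := by
    rw [← Finset.disjoint_coe]; exact hT.mono hs₁ hs₂
  have ht : Disjoint t₁ t₂ := by
    rw [← Finset.disjoint_coe]; exact hT.mono ht₁ ht₂
  refine ⟨s₁ ∪ s₂, t₁ ∪ t₂, ?_, ?_, ?_, fun x => ?_⟩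
  · push_cast; exact Set.union_subset_union hs₁ hs₂
  · push_cast; exact Set.union_subset_union ht₁ ht₂
  · rw [Finset.card_union_of_disjoint hs, Finset.card_union_of_disjoint ht]; omega
  · rw [Finset.sum_union hs, Finset.sum_union ht, Pi.add_apply, hf, hg]; ring

lemma map (e : ℕ × ℕ → ℕ × ℕ) (φ : ℤ → ℤ) (he : Set.InjOn e T)
    (hφ : ∀ p ∈ T, ∀ x, dyadInd (e p) x = dyadInd p (φ x)) (h : IsSignedDyadicSum T n f) :
    IsSignedDyadicSum (e '' T) n (fun x => f (φ x)) := by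
  obtain ⟨s, t, hs, ht, hcard, hf⟩ := h
  refine ⟨s.image e, t.image e, ?_, ?_, ?_, fun x => ?_⟩
  · push_cast; exact Set.image_mono hs
  · push_cast; exact Set.image_mono ht
  · linarith [s.card_image_le (f := e), t.card_image_le (f := e)]
  · dsimp only
    rw [Finset.sum_image (he.mono hs), Finset.sum_image (he.mono ht), hf (φ x)]
    congr 1
    · exact Finset.sum_congr rfl fun p hp => (hφ p (hs hp) x).symm
    · exact Finset.sum_congr rfl fun p hp => (hφ p (ht hp) x).symm

lemma shift {M : ℕ} (hT : T ⊆ dyadicIdx M) (h : IsSignedDyadicSum T n f) :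
    IsSignedDyadicSum (dyadicShift M '' T) n (fun x => f (x - 2 ^ M)) :=
  h.map _ _ (dyadicShift_injective M).injOn
    fun _ hp => dyadInd_dyadicShift (mem_dyadicIdx_s3.1 (hT hp)).2.1

lemma reflect {M : ℕ} (hT : T ⊆ dyadicIdx M) (h : IsSignedDyadicSum T n f) :
    IsSignedDyadicSum (dyadicReflect M '' T) n (fun x => f (2 ^ M + 1 - x)) :=
  h.map _ _ ((dyadicReflect_injOn M).mono hT) fun _ hp => dyadInd_dyadicReflect (hT hp)

end IsSignedDyadicSum

lemma isSignedDyadicSum_prefix_two_pow {l L : ℕ} (hl : l ≤ L) :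
    IsSignedDyadicSum (dyadicIdx L) 1 (intervalInd 1 (2 ^ l)) := by
  rw [← dyadInd_one_left]
  exact .single (dyadicIdx_mono hl (one_mem_dyadicIdx l))

lemma IsSignedDyadicSum.prefix_two_pow_add {M n : ℕ} {u : ℤ} (hu : 0 ≤ u)
    (h : IsSignedDyadicSum (dyadicIdx M) n (intervalInd 1 u)) :
    IsSignedDyadicSum (dyadicIdx (M + 1)) (n + 1) (intervalInd 1 (2 ^ M + u)) := by
  have hpos : (0 : ℤ) < 2 ^ M := by positivity
  have hdisj : Disjoint {(1, M)} (dyadicShift M '' (dyadicIdx M)) :=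
    Set.disjoint_singleton_left.2 <|
      Set.disjoint_left.1 (disjoint_image_dyadicShift M) (one_mem_dyadicIdx M)
  have hsub : {(1, M)} ∪ dyadicShift M '' (dyadicIdx M) ⊆ dyadicIdx (M + 1) :=
    Set.union_subset (by simpa using dyadicIdx_mono M.le_succ (one_mem_dyadicIdx M))
      (image_dyadicShift_subset M)
  rw [add_comm n]
  refine (((single (Set.mem_singleton (1, M))).add hdisj (h.shift le_rfl)).mono hsub
    le_rfl).congr fun x => ?_
  rw [Pi.add_apply, dyadInd_one_left, intervalInd_sub,
    intervalInd_eq_add (b := 2 ^ M + u) (2 ^ M) (by omega) (by omega)]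
  congr 2 <;> ring

lemma IsSignedDyadicSum.prefix_two_pow_sub {L M n : ℕ} {u : ℤ} (hLM : L < M) (hu0 : 0 ≤ u)
    (hu : u ≤ 2 ^ M) (h : IsSignedDyadicSum (dyadicIdx L) n (intervalInd 1 u)) :
    IsSignedDyadicSum (dyadicIdx M) (n + 1) (intervalInd 1 (2 ^ M - u)) := by
  have hLM' : (dyadicIdx L : Set (ℕ × ℕ)) ⊆ dyadicIdx M := by
    exact_mod_cast dyadicIdx_mono hLM.le
  have hdisj : Disjoint {(1, M)} (dyadicReflect M '' (dyadicIdx L)) := by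
    rw [Set.disjoint_singleton_left]
    rintro ⟨p, hp, hpM⟩
    have := (mem_dyadicIdx_s3.1 hp).2.1
    have : p.2 = M := congrArg Prod.snd hpM
    omega
  have hsub : {(1, M)} ∪ dyadicReflect M '' (dyadicIdx L) ⊆ dyadicIdx M :=
    Set.union_subset (by simpa using one_mem_dyadicIdx M)
      ((Set.image_mono hLM').trans (image_dyadicReflect_subset M))
  rw [add_comm n]
  refine (((single (Set.mem_singleton (1, M))).add hdisj (h.reflect hLM').neg).mono hsub
    le_rfl).congr fun x => ?_
  rw [Pi.add_apply, Pi.neg_apply, dyadInd_one_left, intervalInd_sub_left,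
    intervalInd_eq_add (2 ^ M - u) (by omega) (by omega)]
  ring_nf

theorem isSignedDyadicSum_prefix (L : ℕ) :
    ∀ t : ℤ, 0 ≤ t → t ≤ 2 ^ L →
      IsSignedDyadicSum (dyadicIdx L) (L / 2 + 1) (intervalInd 1 t) := by
  induction L using Nat.twoStepInduction with
  | zero =>
    intro t ht0 ht
    obtain rfl | rfl : t = 0 ∨ t = 2 ^ 0 := by omega
    · exact .empty zero_lt_one
    · exact isSignedDyadicSum_prefix_two_pow le_rfl
  | one =>
    intro t ht0 ht
    obtain rfl | rfl | rfl : t = 0 ∨ t = 2 ^ 0 ∨ t = 2 ^ 1 := by omega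
    · exact .empty zero_lt_one
    · exact isSignedDyadicSum_prefix_two_pow zero_le_one
    · exact isSignedDyadicSum_prefix_two_pow le_rfl
  | more L ih ih' =>
    intro t ht0 ht
    have hpow₁ : (2 : ℤ) ^ (L + 1) = 2 * 2 ^ L := by ring
    have hpow₂ : (2 : ℤ) ^ (L + 2) = 4 * 2 ^ L := by ring
    rcases le_or_gt t (2 ^ (L + 1)) with hle | hgt
    · exact (ih' t ht0 hle).mono (by exact_mod_cast dyadicIdx_mono (L + 1).le_succ) (by omega)
    rcases le_or_gt t (3 * 2 ^ L) with hle' | hgt'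
    · have h := ((ih (t - 2 ^ (L + 1)) (by omega) (by omega)).mono
        (by exact_mod_cast dyadicIdx_mono L.le_succ) le_rfl).prefix_two_pow_add (by omega)
      rw [add_sub_cancel] at h
      exact h.mono le_rfl (by omega)
    · have h := (ih (2 ^ (L + 2) - t) (by omega) (by omega)).prefix_two_pow_sub
        (M := L + 2) (by omega) (by omega) (by omega)
      rw [sub_sub_cancel] at h
      exact h.mono le_rfl (by omega)

theorem isSignedDyadicSum_suffix {L : ℕ} {t : ℤ} (ht0 : 0 ≤ t) (ht : t ≤ 2 ^ L) :
    IsSignedDyadicSum (dyadicIdx L) (L / 2 + 1) (intervalInd (t + 1) (2 ^ L)) := by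
  have h := (isSignedDyadicSum_prefix L (2 ^ L - t) (by omega) (by omega)).reflect le_rfl
  refine (h.mono (image_dyadicReflect_subset L) le_rfl).congr fun x => ?_
  rw [intervalInd_sub_left]
  congr 1 <;> ring

theorem isSignedDyadicSum_interval (L : ℕ) :
    ∀ a b : ℤ, 0 ≤ a → a ≤ b → b ≤ 2 ^ L →
      IsSignedDyadicSum (dyadicIdx L) (L + 1) (intervalInd (a + 1) b) := by
  induction L with
  | zero =>
    intro a b ha hab hb
    obtain rfl | ⟨rfl, rfl⟩ : a = b ∨ a = 0 ∧ b = 2 ^ 0 := by omega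
    · exact .empty (lt_add_one a)
    · rw [zero_add]
      exact isSignedDyadicSum_prefix_two_pow le_rfl
  | succ L ih =>
    intro a b ha hab hb
    have hpow : (2 : ℤ) ^ (L + 1) = 2 * 2 ^ L := by ring
    have hsub : (dyadicIdx L : Set (ℕ × ℕ)) ⊆ dyadicIdx (L + 1) := by
      exact_mod_cast dyadicIdx_mono L.le_succ
    rcases le_or_gt b (2 ^ L) with hbL | hLb
    · exact (ih a b ha hab hbL).mono hsub (by omega)
    rcases le_or_gt (2 ^ L) a with hLa | haL
    · have h := (ih (a - 2 ^ L) (b - 2 ^ L) (by omega) (by omega) (by omega)).shift le_rfl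
      refine (h.mono (image_dyadicShift_subset L) (by omega)).congr fun x => ?_
      rw [intervalInd_sub]
      congr 1 <;> ring
    · have h := (isSignedDyadicSum_suffix ha haL.le).add (disjoint_image_dyadicShift L)
        ((isSignedDyadicSum_prefix L (b - 2 ^ L) (by omega) (by omega)).shift le_rfl)
      refine (h.mono (Set.union_subset hsub (image_dyadicShift_subset L)) (by omega)).congr
        fun x => ?_
      rw [Pi.add_apply, intervalInd_sub,
        intervalInd_eq_add (b := b) (2 ^ L) (by omega) (by omega)]
      congr 2 <;> ring

lemma IsSignedDyadicSum.exists_coeff {L n : ℕ} {f : ℤ → ℝ}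
    (h : IsSignedDyadicSum (dyadicIdx L) n f) :
    ∃ χ : ℕ × ℕ → ℤ, (∀ p, χ p = -1 ∨ χ p = 0 ∨ χ p = 1) ∧
      ((dyadicIdx L).filter (fun p => χ p ≠ 0)).card ≤ n ∧
      ∀ x, f x = ∑ p ∈ dyadicIdx L, (χ p : ℝ) * dyadInd p x := by
  classical
  obtain ⟨s, t, hs, ht, hcard, hf⟩ := h
  rw [Finset.coe_subset] at hs ht
  refine ⟨fun p => (if p ∈ s then 1 else 0) - (if p ∈ t then 1 else 0),
    fun p => by dsimp only; split_ifs <;> simp, ?_, fun x => ?_⟩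
  · calc _ ≤ (s ∪ t).card := Finset.card_le_card fun p hp => Finset.mem_union.2 <| by
          by_contra! hst
          simp [hst.1, hst.2] at hp
      _ ≤ s.card + t.card := Finset.card_union_le s t
      _ ≤ n := hcard
  · simp only [hf x, Int.cast_sub, Int.cast_ite, Int.cast_one, Int.cast_zero, sub_mul, ite_mul,
      one_mul, zero_mul, Finset.sum_sub_distrib, Finset.sum_ite_mem, Finset.inter_eq_right.2 hs,
      Finset.inter_eq_right.2 ht]

theorem stmt3 (L : ℕ) (t1 t2 : ℤ) (h1 : 0 ≤ t1) (h12 : t1 < t2) (h2 : t2 ≤ 2 ^ L) :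
    ∃ χ : ℕ × ℕ → ℤ,
      (∀ p, χ p = -1 ∨ χ p = 0 ∨ χ p = 1) ∧
      ((dyadicIdx L).filter (fun p => χ p ≠ 0)).card ≤ L + 1 ∧
      ∀ x : ℤ, intervalInd (t1 + 1) t2 x =
        ∑ p ∈ dyadicIdx L, (χ p : ℝ) *
          intervalInd (((p.1 : ℤ) - 1) * 2 ^ p.2 + 1) ((p.1 : ℤ) * 2 ^ p.2) x :=
  (isSignedDyadicSum_interval L t1 t2 h1 h12.le h2).exists_coeff
end

section
/- Consider the continual-observation mechanism on data streams (x_1,...,x_N) with x_i ∈ [0,1]: for each t ∈ [N] it releases ŝ_t = Σ_{i=1}^t x_i + Σ_{l=0}^L η_{⌈t/2^l⌉,l}, where L = ⌈log₂ N⌉ and the η_{j,l} are independent mean-zero Laplace random variables with scale ⌈(L+1)/2⌉/ε. If two streams differ in at most one time step, this mechanism is ε-differentially private. -/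
open MeasureTheory ProbabilityTheory

/-- the mean-zero Laplace distribution with scale `b`, given by its density -/
noncomputable def laplaceMeasure (b : ℝ) : Measure ℝ :=
  volume.withDensity (fun x => ENNReal.ofReal ((1 / (2 * b)) * Real.exp (-|x| / b)))

/-- continual-observation mechanism: for each time `t ∈ [N]` (1-indexed `t = t.val + 1`)
release the partial sum `Σ_{i=1}^t x_i` plus `Σ_{l=0}^L η_{⌈t/2^l⌉,l}`. -/
noncomputable def contMechanism {Ω : Type*} (N L : ℕ) (x : Fin N → ℝ)
    (η : ℕ × ℕ → Ω → ℝ) (ω : Ω) : Fin N → ℝ :=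
  fun t => (∑ i ∈ Finset.univ.filter (fun i : Fin N => i ≤ t), x i) +
    ∑ l ∈ Finset.range (L + 1), η ((((t : ℕ) + 1) + 2 ^ l - 1) / 2 ^ l, l) ω

/-!
Write the released vector as `F x Y`, where `Y` is the vector of tree noises (i.i.d. Laplace with
scale `b = ⌈(L+1)/2⌉ / ε`) and `F x y t = ∑_{i ≤ t} x i + ∑_l y (t / 2^l, l)` is affine in `y`. If `x, x'` differ only at `i₀`, their partial sums differ by `c • 1[i₀ ≤ t]` with
`|c| ≤ 1`, and this step is `∑_l w (t / 2^l, l)` for a node vector `w` with at most `⌈(L+1)/2⌉`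
nonzero entries, all in `[-1, 1]`: take either the dyadic blocks tiling the suffix `[i₀, 2^L)`, or
the root minus the blocks tiling the prefix `[0, i₀)`. The two counts add up to at most `L + 2`
because the ones of `i₀` and the zeros of `i₀ - 1` can only share the lowest set bit of `i₀`.
Hence `F x y = F x' (y + c • w)`, and shifting a product of Laplace densities by a vector of
`ℓ¹`-norm at most `⌈(L+1)/2⌉` changes it by a factor at most `exp ε`.
-/

open Finset
open scoped ENNReal

/-- For `a < b < 2 ^ L` there is exactly one level `l < L` at which the dyadic blocks of `a` and
`b` are siblings (left and right child of their lowest common ancestor). -/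
theorem sum_range_ite_dyadic_sibling {R : Type*} [AddCommMonoidWithOne R] :
    ∀ {L a b : ℕ}, b < 2 ^ L →
      ∑ l ∈ range L, (if a / 2 ^ l % 2 = 0 ∧ b / 2 ^ l = a / 2 ^ l + 1 then (1 : R) else 0) =
        if a < b then 1 else 0
  | 0, a, b, hb => by simp [show b = 0 by simpa using hb]
  | L + 1, a, b, hb => by
    rw [sum_range_succ']
    simp only [pow_succ', ← Nat.div_div_eq_div_mul, pow_zero, Nat.div_one]
    rw [sum_range_ite_dyadic_sibling (by omega)]
    split_ifs <;> first | omega | simp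

theorem Finset.mk_mem_image_graph {α β : Type*} [DecidableEq α] [DecidableEq β] {s : Finset β}
    {f : β → α} {a : α} {b : β} : (a, b) ∈ s.image (fun k => (f k, k)) ↔ b ∈ s ∧ f b = a := by
  simp [and_comm]

theorem exists_dyadic_suffix_decomposition (L u : ℕ) :
    ∃ (w : ℕ × ℕ → ℝ) (D : Finset (ℕ × ℕ)), #D ≤ #{l ∈ range L | u / 2 ^ l % 2 = 0} ∧
      (∀ p ∉ D, w p = 0) ∧ (∀ p, |w p| ≤ 1) ∧
      ∀ t < 2 ^ L, ∑ l ∈ range (L + 1), w (t / 2 ^ l, l) = if u < t then 1 else 0 := by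
  classical
  set D := {l ∈ range L | u / 2 ^ l % 2 = 0}.image fun l => (u / 2 ^ l + 1, l)
  refine ⟨fun p => if p ∈ D then 1 else 0, D, card_image_le, fun p hp => if_neg hp,
    fun p => by dsimp only; split_ifs <;> simp, fun t ht => ?_⟩
  rw [sum_range_succ, ← sum_range_ite_dyadic_sibling ht]
  simp only [D, Finset.mk_mem_image_graph, mem_filter, mem_range, lt_irrefl, false_and, if_false,
    add_zero]
  exact sum_congr rfl fun l hl => if_congr (by simp at hl; omega) rfl rfl

theorem exists_dyadic_prefix_complement_decomposition {L m : ℕ} (hm : m < 2 ^ L) :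
    ∃ (w : ℕ × ℕ → ℝ) (D : Finset (ℕ × ℕ)), #D ≤ #{l ∈ range L | m / 2 ^ l % 2 = 1} + 1 ∧
      (∀ p ∉ D, w p = 0) ∧ (∀ p, |w p| ≤ 1) ∧
      ∀ t < 2 ^ L, ∑ l ∈ range (L + 1), w (t / 2 ^ l, l) = if m ≤ t then 1 else 0 := by
  classical
  set E := {l ∈ range L | m / 2 ^ l % 2 = 1}.image fun l => (m / 2 ^ l - 1, l)
  refine ⟨fun p => if p = (0, L) then 1 else if p ∈ E then -1 else 0, insert (0, L) E,
    (card_insert_le _ _).trans (Nat.add_le_add_right card_image_le 1),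
    fun p hp => by simp_all, fun p => by dsimp only; split_ifs <;> simp, fun t ht => ?_⟩
  have hlow : ∀ l ∈ range L, (if (t / 2 ^ l, l) = (0, L) then 1 else
      if (t / 2 ^ l, l) ∈ E then -1 else 0) =
      -(if t / 2 ^ l % 2 = 0 ∧ m / 2 ^ l = t / 2 ^ l + 1 then (1 : ℝ) else 0) := by
    intro l hl
    simp only [mem_range] at hl
    simp only [E, Prod.mk.injEq, hl.ne, and_false, if_false, Finset.mk_mem_image_graph,
      mem_filter, mem_range, hl, true_and]
    generalize m / 2 ^ l = M, t / 2 ^ l = T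
    split_ifs <;> first | omega | simp
  rw [sum_range_succ, sum_congr rfl hlow, sum_neg_distrib, sum_range_ite_dyadic_sibling hm,
    Nat.div_eq_of_lt ht]
  split_ifs <;> first | omega | simp

theorem Nat.dvd_of_pred_div_ne {m k : ℕ} (h : (m - 1) / k ≠ m / k) : k ∣ m := by
  rcases m with _ | m
  · exact dvd_zero k
  · by_contra hk
    simp [Nat.succ_div, hk] at h

theorem Nat.div_two_pow_mod_two_eq_zero {m l l' : ℕ} (hl : l < l') (h : 2 ^ l' ∣ m) :
    m / 2 ^ l % 2 = 0 :=
  Nat.mod_eq_zero_of_dvd <| (Nat.dvd_div_iff_mul_dvd ((pow_dvd_pow 2 hl.le).trans h)).mpr <|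
    (pow_dvd_pow 2 hl).trans h

theorem card_odd_add_card_even_pred_le (L m : ℕ) :
    #{l ∈ range L | m / 2 ^ l % 2 = 1} + #{l ∈ range L | (m - 1) / 2 ^ l % 2 = 0} ≤ L + 1 := by
  rw [← card_union_add_card_inter]
  have hunion : #({l ∈ range L | m / 2 ^ l % 2 = 1} ∪ {l ∈ range L | (m - 1) / 2 ^ l % 2 = 0})
      ≤ L :=
    (card_le_card (union_subset (filter_subset _ _) (filter_subset _ _))).trans_eq (card_range L)
  -- a common level `l` has `2 ^ l ∣ m` with `m / 2 ^ l` odd, which pins `l` down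
  have hinter : #({l ∈ range L | m / 2 ^ l % 2 = 1} ∩ {l ∈ range L | (m - 1) / 2 ^ l % 2 = 0})
      ≤ 1 := by
    refine card_le_one.mpr fun l hl l' hl' => ?_
    simp only [mem_inter, mem_filter] at hl hl'
    have hdvd : 2 ^ l ∣ m := Nat.dvd_of_pred_div_ne (by omega)
    have hdvd' : 2 ^ l' ∣ m := Nat.dvd_of_pred_div_ne (by omega)
    rcases lt_trichotomy l l' with h | h | h
    · have := Nat.div_two_pow_mod_two_eq_zero h hdvd'; omega
    · exact h
    · have := Nat.div_two_pow_mod_two_eq_zero h hdvd; omega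
  omega

theorem exists_dyadic_step_decomposition {L m : ℕ} (hm : m < 2 ^ L) :
    ∃ (w : ℕ × ℕ → ℝ) (D : Finset (ℕ × ℕ)), #D ≤ (L + 2) / 2 ∧
      (∀ p ∉ D, w p = 0) ∧ (∀ p, |w p| ≤ 1) ∧
      ∀ t < 2 ^ L, ∑ l ∈ range (L + 1), w (t / 2 ^ l, l) = if m ≤ t then 1 else 0 := by
  have hcount := card_odd_add_card_even_pred_le L m
  by_cases hfew : #{l ∈ range L | m / 2 ^ l % 2 = 1} + 1 ≤ (L + 2) / 2
  · obtain ⟨w, D, hD, hw⟩ := exists_dyadic_prefix_complement_decomposition hm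
    exact ⟨w, D, hD.trans hfew, hw⟩
  · have hm0 : m ≠ 0 := by rintro rfl; simp at hfew
    obtain ⟨w, D, hD, hw0, hw1, hsum⟩ := exists_dyadic_suffix_decomposition L (m - 1)
    refine ⟨w, D, by omega, hw0, hw1, fun t ht => ?_⟩
    rw [hsum t ht]
    exact if_congr (by omega) rfl rfl

theorem lmarginal_fintype_prod {ι : Type*} [Fintype ι] [DecidableEq ι] {X : ι → Type*}
    [∀ i, MeasurableSpace (X i)] (μ : ∀ i, Measure (X i)) [∀ i, SigmaFinite (μ i)]
    {g : ∀ i, X i → ℝ≥0∞} (hg : ∀ i, Measurable (g i)) (s : Finset ι) (y : ∀ i, X i) :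
    (∫⋯∫⁻_s, fun y => ∏ i, g i (y i) ∂μ) y =
      (∏ i ∈ s, ∫⁻ x, g i x ∂μ i) * ∏ i ∈ sᶜ, g i (y i) := by
  induction s using Finset.induction_on generalizing y with
  | empty => simp
  | insert i s hi ih =>
    have hupd (x : X i) : ∏ j ∈ sᶜ.erase i, g j (Function.update y i x j) =
        ∏ j ∈ sᶜ.erase i, g j (y j) :=
      prod_congr rfl fun j hj => by rw [Function.update_of_ne (ne_of_mem_erase hj)]
    have hprod : Measurable fun y : ∀ i, X i => ∏ i, g i (y i) := by fun_prop
    simp_rw [lmarginal_insert _ hprod hi, ih, ← mul_prod_erase _ _ (mem_compl.mpr hi),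
      Function.update_self, hupd]
    rw [lintegral_const_mul _ ((hg i).mul_const _), lintegral_mul_const _ (hg i), prod_insert hi,
      compl_insert]
    ring

theorem lintegral_fintype_prod_eq_prod {ι : Type*} [Fintype ι] {X : ι → Type*}
    [∀ i, MeasurableSpace (X i)] (μ : ∀ i, Measure (X i)) [∀ i, SigmaFinite (μ i)]
    {g : ∀ i, X i → ℝ≥0∞} (hg : ∀ i, Measurable (g i)) :
    ∫⁻ y, ∏ i, g i (y i) ∂Measure.pi μ = ∏ i, ∫⁻ x, g i x ∂μ i := by
  classical
  rcases isEmpty_or_nonempty (∀ i, X i) with hempty | ⟨⟨y⟩⟩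
  · obtain ⟨i, hi⟩ := isEmpty_pi.mp hempty
    rw [lintegral_of_isEmpty, Finset.prod_eq_zero (mem_univ i) (lintegral_of_isEmpty _ _)]
  · simpa using lmarginal_fintype_prod μ hg univ y

theorem MeasureTheory.Measure.pi_withDensity {ι : Type*} [Fintype ι] {X : ι → Type*}
    [∀ i, MeasurableSpace (X i)] (μ : ∀ i, Measure (X i)) [∀ i, SigmaFinite (μ i)]
    {f : ∀ i, X i → ℝ≥0∞} (hf : ∀ i, Measurable (f i))
    [∀ i, SigmaFinite ((μ i).withDensity (f i))] :
    Measure.pi (fun i => (μ i).withDensity (f i)) =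
      (Measure.pi μ).withDensity fun y => ∏ i, f i (y i) := by
  refine Measure.pi_eq fun s hs => ?_
  rw [withDensity_apply _ (.univ_pi hs), Measure.restrict_pi_pi,
    lintegral_fintype_prod_eq_prod _ hf]
  exact prod_congr rfl fun i _ => (withDensity_apply _ (hs i)).symm

theorem withDensity_preimage_add_le {G : Type*} [MeasurableSpace G] [AddGroup G]
    [MeasurableAdd G] (μ : Measure G) [μ.IsAddRightInvariant] {ρ : G → ℝ≥0∞} (hρ : Measurable ρ)
    {v : G} {C : ℝ≥0∞} (hC : ∀ y, ρ (y - v) ≤ C * ρ y) {T : Set G} (hT : MeasurableSet T) :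
    μ.withDensity ρ ((· + v) ⁻¹' T) ≤ C * μ.withDensity ρ T := by
  have hshift := (measurePreserving_add_right μ v).setLIntegral_comp_preimage hT
    (hρ.comp (measurable_add_const (-v)))
  simp only [Function.comp_apply, add_neg_cancel_right] at hshift
  simp only [← sub_eq_add_neg] at hshift
  calc μ.withDensity ρ ((· + v) ⁻¹' T) = ∫⁻ y in T, ρ (y - v) ∂μ := by
        rw [withDensity_apply _ (hT.preimage (measurable_add_const v)), hshift]
    _ ≤ ∫⁻ y in T, C * ρ y ∂μ := lintegral_mono fun y => hC y
    _ = C * μ.withDensity ρ T := by rw [lintegral_const_mul _ hρ, withDensity_apply _ hT]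

instance (b : ℝ) : SigmaFinite (laplaceMeasure b) := SigmaFinite.withDensity_ofReal _

theorem laplace_density_sub_le {b : ℝ} (hb : 0 < b) (a x : ℝ) :
    1 / (2 * b) * Real.exp (-|x - a| / b) ≤
      Real.exp (|a| / b) * (1 / (2 * b) * Real.exp (-|x| / b)) := by
  rw [mul_left_comm, ← Real.exp_add, ← add_div]
  gcongr
  linarith [abs_sub_abs_le_abs_sub x a]

theorem pi_laplaceMeasure_preimage_add_le {ι : Type*} [Fintype ι] {b : ℝ} (hb : 0 < b)
    (v : ι → ℝ) {T : Set (ι → ℝ)} (hT : MeasurableSet T) :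
    Measure.pi (fun _ : ι => laplaceMeasure b) ((· + v) ⁻¹' T) ≤
      ENNReal.ofReal (Real.exp ((∑ i, |v i|) / b)) *
        Measure.pi (fun _ => laplaceMeasure b) T := by
  have hf : Measurable fun x : ℝ => ENNReal.ofReal (1 / (2 * b) * Real.exp (-|x| / b)) := by
    fun_prop
  simp only [laplaceMeasure]
  rw [Measure.pi_withDensity _ fun _ => hf]
  refine withDensity_preimage_add_le _ (by fun_prop) (fun y => ?_) hT
  rw [sum_div, Real.exp_sum, ENNReal.ofReal_prod_of_nonneg fun _ _ => (Real.exp_pos _).le,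
    ← prod_mul_distrib]
  refine prod_le_prod' fun i _ => ?_
  rw [← ENNReal.ofReal_mul (Real.exp_pos _).le]
  exact ENNReal.ofReal_le_ofReal (laplace_density_sub_le hb (v i) (y i))

theorem measure_preimage_le_of_map_eq_pi_laplaceMeasure {Ω ι β : Type*} [MeasurableSpace Ω]
    [Fintype ι] [MeasurableSpace β] {μ : Measure Ω} {Y : Ω → ι → ℝ} (hY : Measurable Y) {b : ℝ}
    (hb : 0 < b) (hlaw : μ.map Y = Measure.pi fun _ => laplaceMeasure b) {F F' : (ι → ℝ) → β}
    (hF' : Measurable F') {v : ι → ℝ} (hF : ∀ y, F y = F' (y + v)) {S : Set β}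
    (hS : MeasurableSet S) :
    μ (Y ⁻¹' (F ⁻¹' S)) ≤
      ENNReal.ofReal (Real.exp ((∑ i, |v i|) / b)) * μ (Y ⁻¹' (F' ⁻¹' S)) := by
  have hshift : F ⁻¹' S = (· + v) ⁻¹' (F' ⁻¹' S) := by ext y; simp [hF]
  rw [hshift, ← Measure.map_apply hY ((hF' hS).preimage (measurable_add_const v)),
    ← Measure.map_apply hY (hF' hS), hlaw]
  exact pi_laplaceMeasure_preimage_add_le hb v (hF' hS)

theorem Finset.sum_eq_sum_add_ite_of_eq_of_ne {α M : Type*} [DecidableEq α] [AddCommGroup M]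
    {x x' : α → M} {i₀ : α} (h : ∀ j, j ≠ i₀ → x j = x' j) (s : Finset α) :
    ∑ i ∈ s, x i = ∑ i ∈ s, x' i + if i₀ ∈ s then x i₀ - x' i₀ else 0 := by
  rw [← sub_eq_iff_eq_add', ← sum_sub_distrib, ← sum_ite_eq' s i₀ fun i => x i - x' i]
  refine sum_congr rfl fun i _ => ?_
  split_ifs with hi
  · rw [hi]
  · rw [h i hi, sub_self]

theorem sum_abs_mul_comp_le_card {κ α : Type*} [Fintype κ] {g : κ → α} (hg : g.Injective)
    {w : α → ℝ} {D : Finset α} (hD : ∀ p ∉ D, w p = 0) (hw : ∀ p, |w p| ≤ 1) (c : ℝ) :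
    ∑ k, |c * w (g k)| ≤ |c| * #D := by
  classical
  simp only [abs_mul, ← mul_sum]
  gcongr
  calc ∑ k, |w (g k)| ≤ ∑ k, if g k ∈ D then (1 : ℝ) else 0 :=
        sum_le_sum fun k _ => by split_ifs with h <;> simp [h, hD, hw]
    _ = #{k | g k ∈ D} := by rw [sum_boole]
    _ ≤ #D := by exact_mod_cast card_le_card_of_injOn g (by simp [Set.MapsTo]) hg.injOn

theorem ProbabilityTheory.iIndepFun.map_comp_eq_pi {ι κ Ω β : Type*} [Fintype κ]
    [MeasurableSpace Ω] [MeasurableSpace β] {μ : Measure Ω} {η : ι → Ω → β}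
    (hmeas : ∀ i, Measurable (η i)) (hindep : iIndepFun η μ) {ν : Measure β}
    (hlaw : ∀ i, μ.map (η i) = ν) {g : κ → ι} (hg : g.Injective) :
    μ.map (fun ω k => η (g k) ω) = Measure.pi fun _ => ν := by
  rw [(hindep.precomp hg).map_fun_eq_pi_map fun k => (hmeas _).aemeasurable]
  simp only [hlaw]

theorem Nat.add_one_add_sub_one_div {n : ℕ} (hn : 0 < n) (t : ℕ) :
    (t + 1 + n - 1) / n = t / n + 1 := by
  rw [add_right_comm, Nat.add_sub_cancel, Nat.add_div_right _ hn]

-- the `0`-based index of the level-`l` block containing `t`; the paper's `⌈(t + 1) / 2 ^ l⌉` is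
-- one more, hence the shift `η (j + 1, l)` below
def dyadicNode {N L : ℕ} (t : Fin N) (l : Fin (L + 1)) : Fin N × Fin (L + 1) :=
  (⟨t / 2 ^ (l : ℕ), (Nat.div_le_self _ _).trans_lt t.2⟩, l)

noncomputable def treeMechanism (N L : ℕ) (x : Fin N → ℝ) (y : Fin N × Fin (L + 1) → ℝ) :
    Fin N → ℝ :=
  fun t => ∑ i ∈ univ.filter (· ≤ t), x i + ∑ l, y (dyadicNode t l)

theorem measurable_treeMechanism (N L : ℕ) (x : Fin N → ℝ) :
    Measurable (treeMechanism N L x) := by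
  unfold treeMechanism; fun_prop

theorem contMechanism_eq_treeMechanism {Ω : Type*} (N L : ℕ) (x : Fin N → ℝ)
    (η : ℕ × ℕ → Ω → ℝ) (ω : Ω) :
    contMechanism N L x η ω = treeMechanism N L x (fun k => η (k.1 + 1, k.2) ω) := by
  funext t
  simp only [contMechanism, treeMechanism, dyadicNode,
    Nat.add_one_add_sub_one_div (Nat.two_pow_pos _)]
  rw [Fin.sum_univ_eq_sum_range (fun l => η (t / 2 ^ l + 1, l) ω)]

theorem treeMechanism_eq_add_shift {N L : ℕ} {x x' : Fin N → ℝ} {i₀ : Fin N}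
    (hx : ∀ j, j ≠ i₀ → x j = x' j) {w : ℕ × ℕ → ℝ}
    (hw : ∀ t : Fin N, ∑ l ∈ range (L + 1), w (t / 2 ^ l, l) = if (i₀ : ℕ) ≤ t then 1 else 0)
    (y : Fin N × Fin (L + 1) → ℝ) :
    treeMechanism N L x y =
      treeMechanism N L x' (y + fun k => (x i₀ - x' i₀) * w (k.1, k.2)) := by
  funext t
  simp only [treeMechanism, dyadicNode, Pi.add_apply, sum_add_distrib, ← mul_sum]
  rw [Fin.sum_univ_eq_sum_range (fun l => w (t / 2 ^ l, l)), hw t,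
    sum_eq_sum_add_ite_of_eq_of_ne hx]
  simp only [mem_filter, mem_univ, true_and, Fin.le_def]
  split_ifs <;> ring

theorem stmt12_general {Ω : Type*} [MeasurableSpace Ω] (μ : Measure Ω)
    (N L : ℕ) (hL : L = Nat.clog 2 N)
    (ε : ℝ) (hε : 0 < ε)
    (η : ℕ × ℕ → Ω → ℝ) (hmeas : ∀ p, Measurable (η p))
    (hindep : iIndepFun η μ)
    (hlaw : ∀ p, μ.map (η p) = laplaceMeasure ((((L + 1 + 1) / 2 : ℕ) : ℝ) / ε)) :
    ∀ x x' : Fin N → ℝ,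
      (∀ i, x i ∈ Set.Icc (0 : ℝ) 1) → (∀ i, x' i ∈ Set.Icc (0 : ℝ) 1) →
      (∃ i0, ∀ j, j ≠ i0 → x j = x' j) →
      ∀ S : Set (Fin N → ℝ), MeasurableSet S →
        μ {ω | contMechanism N L x η ω ∈ S} ≤
          ENNReal.ofReal (Real.exp ε) * μ {ω | contMechanism N L x' η ω ∈ S} := by
  intro x x' hx hx' ⟨i₀, hxx'⟩ S hS
  set K : ℕ := (L + 1 + 1) / 2
  have hK : (0 : ℝ) < K := by exact_mod_cast Nat.div_pos (by omega) two_pos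
  have hN : N ≤ 2 ^ L := hL ▸ Nat.le_pow_clog one_lt_two N
  obtain ⟨w, D, hD, hw0, hw1, hstep⟩ := exists_dyadic_step_decomposition (i₀.2.trans_le hN)
  set Y : Ω → Fin N × Fin (L + 1) → ℝ := fun ω k => η (k.1 + 1, k.2) ω
  have hY : Measurable Y := measurable_pi_lambda _ fun k => hmeas _
  have hlawY : μ.map Y = Measure.pi fun _ => laplaceMeasure (K / ε) :=
    hindep.map_comp_eq_pi hmeas hlaw fun k k' h => by simpa [Prod.ext_iff, Fin.ext_iff] using h
  set v : Fin N × Fin (L + 1) → ℝ := fun k => (x i₀ - x' i₀) * w (k.1, k.2)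
  have hv : ∑ k, |v k| ≤ K := by
    have hc : |x i₀ - x' i₀| ≤ 1 :=
      abs_sub_le_of_nonneg_of_le (hx i₀).1 (hx i₀).2 (hx' i₀).1 (hx' i₀).2
    refine (sum_abs_mul_comp_le_card (fun k k' h => by simpa [Prod.ext_iff, Fin.ext_iff] using h)
      hw0 hw1 _).trans ?_
    exact (mul_le_of_le_one_left (by positivity) hc).trans (by exact_mod_cast hD)
  have hpre (z : Fin N → ℝ) :
      {ω | contMechanism N L z η ω ∈ S} = Y ⁻¹' (treeMechanism N L z ⁻¹' S) := by
    ext ω; simp [contMechanism_eq_treeMechanism, Y]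
  calc μ {ω | contMechanism N L x η ω ∈ S}
      ≤ ENNReal.ofReal (Real.exp ((∑ k, |v k|) / (K / ε))) *
          μ {ω | contMechanism N L x' η ω ∈ S} := by
        rw [hpre, hpre]
        exact measure_preimage_le_of_map_eq_pi_laplaceMeasure hY (div_pos hK hε) hlawY
          (measurable_treeMechanism N L x')
          (treeMechanism_eq_add_shift hxx' fun t => hstep t (t.2.trans_le hN)) hS
    _ ≤ ENNReal.ofReal (Real.exp ε) * μ {ω | contMechanism N L x' η ω ∈ S} := by
        gcongr
        rwa [div_div_eq_mul_div, div_le_iff₀ hK, mul_comm, mul_le_mul_iff_right₀ hε]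

theorem stmt12 {Ω : Type*} [MeasurableSpace Ω] (μ : Measure Ω) [IsProbabilityMeasure μ]
    (N L : ℕ) (hN : 1 ≤ N) (hL : L = Nat.clog 2 N)
    (ε : ℝ) (hε : 0 < ε)
    (η : ℕ × ℕ → Ω → ℝ) (hmeas : ∀ p, Measurable (η p))
    (hindep : iIndepFun η μ)
    (hlaw : ∀ p, μ.map (η p) = laplaceMeasure ((((L + 1 + 1) / 2 : ℕ) : ℝ) / ε)) :
    ∀ x x' : Fin N → ℝ,
      (∀ i, x i ∈ Set.Icc (0 : ℝ) 1) → (∀ i, x' i ∈ Set.Icc (0 : ℝ) 1) →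
      (∃ i0, ∀ j, j ≠ i0 → x j = x' j) →
      ∀ S : Set (Fin N → ℝ), MeasurableSet S →
        μ {ω | contMechanism N L x η ω ∈ S} ≤
          ENNReal.ofReal (Real.exp ε) * μ {ω | contMechanism N L x' η ω ∈ S} :=
  stmt12_general μ N L hL ε hε η hmeas hindep hlaw
end
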